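/- arXiv:1205.2359 — 5 statements merged into one kernel-verified Lean document; each statement's English description precedes it below -/
import Mathlib

section
/- Let f : ℂ → ℂ be complex differentiable (holomorphic) on an open set containing the closed unit disc {z : |z| ≤ 1}, and let m be a natural number. Then for every real ε with 0 < ε < 1, the integral over the closed annulus A(ε,1) = {z ∈ ℂ : ε ≤ |z| ≤ 1} of the function z ↦ f(z) · z^m / conj(z), with respect to Lebesgue area measure on ℂ, equals 0. -/
/-!
Expand `f = ∑ aₙ zⁿ`; the series converges on a disc of radius `> 1`, so on the annulus it is
dominated by `∑ ‖aₙ‖`, and the integral is `∑ aₙ ∫ z ^ (n + m) / conj z`. Each of these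
integrals vanishes: for `ω` on the unit circle, `z ↦ ω z` preserves the annulus and Lebesgue
measure and multiplies `z ^ k / conj z` by `ω ^ (k + 1)`, which is `-1` for
`ω = exp (π i / (k + 1))`.
-/

open MeasureTheory Metric ComplexConjugate
open scoped NNReal

lemma isCompact_setOf_le_norm_le {E : Type*} [NormedAddCommGroup E] [ProperSpace E] (a b : ℝ) :
    IsCompact {z : E | a ≤ ‖z‖ ∧ ‖z‖ ≤ b} :=
  (isCompact_closedBall 0 b).of_isClosed_subset
    (isClosed_le continuous_const continuous_norm |>.inter
      (isClosed_le continuous_norm continuous_const))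
    fun _ hz => mem_closedBall_zero_iff.2 hz.2

lemma exists_one_lt_closedBall_subset {U : Set ℂ} (hU : IsOpen U)
    (hsub : closedBall (0 : ℂ) 1 ⊆ U) :
    ∃ R : ℝ≥0, 1 < R ∧ closedBall (0 : ℂ) R ⊆ U := by
  obtain ⟨δ, hδ, hδU⟩ := (isCompact_closedBall (0 : ℂ) 1).exists_cthickening_subset_open hU hsub
  refine ⟨⟨δ + 1, by positivity⟩, ?_, ?_⟩
  · change (1 : ℝ) < δ + 1
    linarith
  · rwa [cthickening_closedBall hδ.le zero_le_one] at hδU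

lemma setIntegral_norm_preimage_comp_circle_mul {E : Type*} [NormedAddCommGroup E]
    [NormedSpace ℝ E] (c : Circle) (T : Set ℝ) (g : ℂ → E) :
    ∫ z in (‖·‖) ⁻¹' T, g (c * z) = ∫ z in (‖·‖) ⁻¹' T, g z := by
  have hpre : rotation c ⁻¹' ((‖·‖) ⁻¹' T) = (‖·‖) ⁻¹' T := by
    ext z; simp [rotation_apply, Circle.norm_coe]
  simpa [hpre, rotation_apply] using
    (rotation c).measurePreserving.setIntegral_preimage_emb
      (rotation c).toHomeomorph.measurableEmbedding g ((‖·‖) ⁻¹' T)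

lemma circle_mul_pow_div_conj (c : Circle) (z : ℂ) (k : ℕ) :
    (c * z) ^ k / conj (c * z) = (c : ℂ) ^ (k + 1) * (z ^ k / conj z) := by
  rw [map_mul, ← Circle.coe_inv_eq_conj, Circle.coe_inv]
  field_simp
  ring

lemma setIntegral_norm_preimage_pow_div_conj_eq_zero (T : Set ℝ) (k : ℕ) :
    ∫ z in ((‖·‖) ⁻¹' T : Set ℂ), z ^ k / conj z = 0 := by
  set ω := Circle.exp (Real.pi / (k + 1))
  have hω : (ω : ℂ) ^ (k + 1) = -1 := by
    have : ω ^ (k + 1) = Circle.exp Real.pi := by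
      rw [← Circle.exp_natCast_mul]; congr 1; push_cast; field_simp
    rw [← Circle.coe_pow, this, Circle.coe_exp, Complex.exp_pi_mul_I]
  have := setIntegral_norm_preimage_comp_circle_mul ω T (fun z : ℂ => z ^ k / conj z)
  simp only [circle_mul_pow_div_conj, hω, neg_one_mul, integral_neg] at this
  linear_combination -this / 2

lemma HasFPowerSeriesOnBall.hasSum_coeff_mul_pow {f : ℂ → ℂ} {p : FormalMultilinearSeries ℂ ℂ ℂ}
    {R : ENNReal} (hf : HasFPowerSeriesOnBall f p 0 R) {z : ℂ} (hz : z ∈ eball 0 R) :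
    HasSum (fun n => p.coeff n * z ^ n) (f z) := by
  simpa [FormalMultilinearSeries.apply_eq_pow_smul_coeff, mul_comm] using hf.hasSum hz

lemma HasFPowerSeriesOnBall.hasSum_setIntegral_mul {f h : ℂ → ℂ}
    {p : FormalMultilinearSeries ℂ ℂ ℂ} {R : ENNReal} (hf : HasFPowerSeriesOnBall f p 0 R)
    {r : ℝ≥0} (hr : (r : ENNReal) < R) {μ : Measure ℂ} {S : Set ℂ} (hSm : MeasurableSet S)
    (hS : S ⊆ closedBall 0 r) (hh : IntegrableOn h S μ) :
    HasSum (fun n => p.coeff n * ∫ z in S, z ^ n * h z ∂μ) (∫ z in S, f z * h z ∂μ) := by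
  have hpow_int (n : ℕ) : IntegrableOn (fun z => z ^ n * h z) S μ := by
    refine hh.bdd_mul (c := r ^ n) (by fun_prop) (ae_restrict_of_forall_mem hSm fun z hz => ?_)
    rw [norm_pow]
    exact pow_le_pow_left₀ (norm_nonneg z) (mem_closedBall_zero_iff.1 (hS hz)) n
  have hnorm_le (n : ℕ) : ∫ z in S, ‖p.coeff n * (z ^ n * h z)‖ ∂μ
      ≤ ‖p.coeff n‖ * r ^ n * ∫ z in S, ‖h z‖ ∂μ := by
    rw [← integral_const_mul]
    refine setIntegral_mono_on ((hpow_int n).const_mul _).norm (hh.norm.const_mul _) hSm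
      fun z hz => ?_
    rw [norm_mul, norm_mul, norm_pow, mul_assoc]
    gcongr
    exact mem_closedBall_zero_iff.1 (hS hz)
  have hsummable : Summable fun n => ‖p.coeff n‖ * r ^ n * ∫ z in S, ‖h z‖ ∂μ := by
    simpa [FormalMultilinearSeries.norm_apply_eq_norm_coef] using
      ((p.summable_norm_mul_pow (hr.trans_le hf.r_le)).mul_right _)
  have hsum := hasSum_integral_of_summable_integral_norm
    (F := fun n z => p.coeff n * (z ^ n * h z)) (fun n => (hpow_int n).const_mul _)
    (hsummable.of_nonneg_of_le (fun n => integral_nonneg fun _ => norm_nonneg _) hnorm_le)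
  have hpointwise : ∀ z ∈ S, f z * h z = ∑' n, p.coeff n * (z ^ n * h z) := fun z hz => by
    have hz : z ∈ eball 0 R := lt_of_le_of_lt (by simpa [← NNReal.coe_le_coe] using hS hz) hr
    simp only [← mul_assoc]
    exact ((hf.hasSum_coeff_mul_pow hz).mul_right (h z)).tsum_eq.symm
  simpa only [integral_const_mul, setIntegral_congr_fun hSm hpointwise] using hsum

theorem integral_holo_mul_pow_div_conj_annulus_eq_zero_general (f : ℂ → ℂ) (U : Set ℂ)
    (hU : IsOpen U) (hsub : Metric.closedBall (0 : ℂ) 1 ⊆ U)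
    (hf : DifferentiableOn ℂ f U) (m : ℕ) (ε : ℝ) (hε0 : 0 < ε) :
    (∫ z in {z : ℂ | ε ≤ ‖z‖ ∧ ‖z‖ ≤ 1},
      f z * z ^ m / (starRingEnd ℂ) z) = 0 := by
  obtain ⟨R, hR1, hRU⟩ := exists_one_lt_closedBall_subset hU hsub
  have hps := (hf.mono hRU).hasFPowerSeriesOnBall (zero_lt_one.trans hR1)
  have hcompact := isCompact_setOf_le_norm_le (E := ℂ) ε 1
  have hcont : ContinuousOn (fun z : ℂ => z ^ m / conj z) {z : ℂ | ε ≤ ‖z‖ ∧ ‖z‖ ≤ 1} :=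
    ContinuousOn.div (by fun_prop) (by fun_prop) fun z hz =>
      (map_ne_zero _).2 (norm_pos_iff.1 (hε0.trans_le hz.1))
  have hint := hcont.integrableOn_compact (μ := volume) hcompact
  have hsum := hps.hasSum_setIntegral_mul (r := 1) (by exact_mod_cast hR1)
    hcompact.isClosed.measurableSet (fun z hz => mem_closedBall_zero_iff.2 hz.2) hint
  have hterm (n : ℕ) : ∫ z in {z : ℂ | ε ≤ ‖z‖ ∧ ‖z‖ ≤ 1}, z ^ n * (z ^ m / conj z) = 0 := by
    simp only [mul_div_assoc', ← pow_add]
    exact setIntegral_norm_preimage_pow_div_conj_eq_zero (Set.Icc ε 1) (n + m)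
  simp only [hterm, mul_zero] at hsum
  simpa only [mul_div_assoc] using hsum.unique hasSum_zero

/-- The vanishing in the special case `K = -1` of Lemma `BddInDisks`: if `f` is holomorphic on
an open set containing the closed unit disc and `m : ℕ`, then for every `0 < ε < 1` the
integral of `z ↦ f z * z ^ m / conj z` over the closed annulus `{z : ε ≤ |z| ≤ 1}` with respect
to Lebesgue area measure on `ℂ` vanishes. -/
theorem integral_holo_mul_pow_div_conj_annulus_eq_zero (f : ℂ → ℂ) (U : Set ℂ)
    (hU : IsOpen U) (hsub : Metric.closedBall (0 : ℂ) 1 ⊆ U)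
    (hf : DifferentiableOn ℂ f U) (m : ℕ) (ε : ℝ) (hε0 : 0 < ε) (hε1 : ε < 1) :
    (∫ z in {z : ℂ | ε ≤ ‖z‖ ∧ ‖z‖ ≤ 1},
      f z * z ^ m / (starRingEnd ℂ) z) = 0 :=
  integral_holo_mul_pow_div_conj_annulus_eq_zero_general f U hU hsub hf m ε hε0
end

section
/- Let c, c₁, c₂ ∈ ℂ with c ≠ 0, let h₁, h₂ : ℂ → ℂ be complex differentiable (holomorphic) on an open set containing the closed unit disc, let L ≥ 0, and let H : ℂ → ℂ be measurable with |H(z)| ≤ L·|z| for all |z| ≤ 1. Then there exists a constant C > 0 such that for every r₀ with 0 < r₀ < 1: the integrand below is integrable on the closed annulus A(r₀,1) = {z ∈ ℂ : r₀ ≤ |z| ≤ 1} and | ∫_{A(r₀,1)} (c₁/z + h₁(z))·(c₂/z + h₂(z)) · (z/conj(z)) · (conj(c)/c + H(z)) dA − 2π·c₁·c₂·(conj(c)/c)·log(1/r₀) | ≤ C. -/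
/-!
On the annulus the integrand equals `g z / ‖z‖ ^ 2` with
`g z = (c₁ + z h₁ z) (c₂ + z h₂ z) (conj c / c + H z)`. Boundedness of `h₁, h₂` on the closed disc
and `‖H z‖ ≤ L ‖z‖` make `g` Lipschitz at the origin: `‖g z - g 0‖ ≤ K ‖z‖`. In polar coordinates
`g 0 / ‖z‖ ^ 2` integrates to exactly `2π g(0) log (1 / r₀)`, and the remainder is dominated by
`K / ‖z‖`, whose integral over the annulus is `2π K (1 - r₀) ≤ 2π K`.
-/

open MeasureTheory Set Metric Real

def annulus (r₀ r₁ : ℝ) : Set ℂ := (‖·‖) ⁻¹' Icc r₀ r₁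

section Annulus

variable {r₀ r₁ : ℝ}

theorem measurableSet_annulus : MeasurableSet (annulus r₀ r₁) :=
  measurable_norm measurableSet_Icc

theorem isCompact_annulus : IsCompact (annulus r₀ r₁) :=
  isCompact_of_isClosed_isBounded (isClosed_Icc.preimage continuous_norm)
    (isBounded_closedBall (x := 0) (r := r₁) |>.subset fun _ hz => by
      simpa using hz.2)

theorem norm_pos_of_mem_annulus (hr₀ : 0 < r₀) {z : ℂ} (hz : z ∈ annulus r₀ r₁) : 0 < ‖z‖ :=
  hr₀.trans_le hz.1

theorem integral_annulus_comp_norm {F : Type*} [NormedAddCommGroup F] [NormedSpace ℝ F]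
    (hr₀ : 0 < r₀) (f : ℝ → F) :
    ∫ z in annulus r₀ r₁, f ‖z‖ = (2 * π) • ∫ r in Icc r₀ r₁, r • f r := by
  have hind : (annulus r₀ r₁).indicator (fun z : ℂ => f ‖z‖) =
      fun z => (Icc r₀ r₁).indicator f ‖z‖ := rfl
  rw [← integral_indicator measurableSet_annulus, hind, integral_fun_norm_addHaar,
    Complex.finrank_real_complex, measureReal_def, Complex.volume_ball]
  have hpow : ∀ y, y ^ (2 - 1) • (Icc r₀ r₁).indicator f y =
      (Icc r₀ r₁).indicator (fun r => r • f r) y := fun y => by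
    by_cases hy : y ∈ Icc r₀ r₁ <;> simp [hy]
  simp_rw [hpow]
  have hpos : Icc r₀ r₁ ⊆ Ioi 0 := fun y hy => hr₀.trans_le hy.1
  rw [integral_indicator measurableSet_Icc, Measure.restrict_restrict measurableSet_Icc,
    inter_eq_left.mpr hpos, ← smul_assoc, nsmul_eq_mul]
  simp

theorem integral_annulus_inv_norm_sq (hr₀ : 0 < r₀) (hr : r₀ ≤ r₁) :
    ∫ z in annulus r₀ r₁, (‖z‖ ^ 2)⁻¹ = 2 * π * log (r₁ / r₀) := by
  rw [integral_annulus_comp_norm hr₀ fun r => (r ^ 2)⁻¹, smul_eq_mul,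
    setIntegral_congr_fun (g := fun r => r⁻¹) measurableSet_Icc fun r (hr : r ∈ Icc r₀ r₁) => by
      simp only [smul_eq_mul]; field_simp [(hr₀.trans_le hr.1).ne'],
    integral_Icc_eq_integral_Ioc, ← intervalIntegral.integral_of_le hr,
    integral_inv_of_pos hr₀ (hr₀.trans_le hr)]

theorem integral_annulus_inv_norm (hr₀ : 0 < r₀) (hr : r₀ ≤ r₁) :
    ∫ z in annulus r₀ r₁, ‖z‖⁻¹ = 2 * π * (r₁ - r₀) := by
  rw [integral_annulus_comp_norm hr₀ fun r => r⁻¹, smul_eq_mul,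
    setIntegral_congr_fun (g := fun _ => 1) measurableSet_Icc fun r (hr : r ∈ Icc r₀ r₁) => by
      simp only [smul_eq_mul]; field_simp [(hr₀.trans_le hr.1).ne'],
    integral_Icc_eq_integral_Ioc, ← intervalIntegral.integral_of_le hr]
  simp

theorem integrableOn_annulus_comp_norm {F : Type*} [NormedAddCommGroup F] (hr₀ : 0 < r₀)
    {f : ℝ → F} (hf : ContinuousOn f (Ioi 0)) :
    IntegrableOn (fun z : ℂ => f ‖z‖) (annulus r₀ r₁) :=
  (hf.comp continuous_norm.continuousOn fun _ hz =>
    norm_pos_of_mem_annulus hr₀ hz).integrableOn_compact isCompact_annulus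

theorem integrableOn_annulus_inv_norm (hr₀ : 0 < r₀) :
    IntegrableOn (fun z : ℂ => ‖z‖⁻¹) (annulus r₀ r₁) :=
  integrableOn_annulus_comp_norm hr₀ (continuousOn_inv₀.mono fun _ hr => ne_of_gt hr)

theorem integrableOn_annulus_inv_norm_sq (hr₀ : 0 < r₀) :
    IntegrableOn (fun z : ℂ => (‖z‖ ^ 2)⁻¹) (annulus r₀ r₁) :=
  integrableOn_annulus_comp_norm hr₀
    ((continuousOn_pow 2).inv₀ fun _ hr => pow_ne_zero 2 (ne_of_gt hr))

end Annulus

section LinearDeviation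

variable {E : Type*} [NormedAddCommGroup E] [NormedSpace ℝ E]
  {r₀ r₁ K : ℝ} {g : ℂ → E} {w : E}

theorem ae_norm_inv_norm_sq_smul_sub_le (hr₀ : 0 < r₀)
    (hgw : ∀ z ∈ annulus r₀ r₁, ‖g z - w‖ ≤ K * ‖z‖) :
    ∀ᵐ z ∂volume.restrict (annulus r₀ r₁), ‖(‖z‖ ^ 2)⁻¹ • (g z - w)‖ ≤ K * ‖z‖⁻¹ := by
  filter_upwards [ae_restrict_mem measurableSet_annulus] with z hz
  have hz₀ := norm_pos_of_mem_annulus hr₀ hz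
  calc ‖(‖z‖ ^ 2)⁻¹ • (g z - w)‖ = (‖z‖ ^ 2)⁻¹ * ‖g z - w‖ := by
        rw [norm_smul, norm_inv, norm_pow, norm_norm]
    _ ≤ (‖z‖ ^ 2)⁻¹ * (K * ‖z‖) := by gcongr; exact hgw z hz
    _ = K * ‖z‖⁻¹ := by field_simp

theorem integrableOn_annulus_inv_norm_sq_smul_sub (hr₀ : 0 < r₀)
    (hg : AEStronglyMeasurable g (volume.restrict (annulus r₀ r₁)))
    (hgw : ∀ z ∈ annulus r₀ r₁, ‖g z - w‖ ≤ K * ‖z‖) :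
    IntegrableOn (fun z => (‖z‖ ^ 2)⁻¹ • (g z - w)) (annulus r₀ r₁) :=
  Integrable.mono' ((integrableOn_annulus_inv_norm hr₀).const_mul K)
    ((measurable_norm.pow_const 2).inv.aestronglyMeasurable.smul
      (hg.sub aestronglyMeasurable_const)) (ae_norm_inv_norm_sq_smul_sub_le hr₀ hgw)

theorem integrableOn_annulus_inv_norm_sq_smul (hr₀ : 0 < r₀)
    (hg : AEStronglyMeasurable g (volume.restrict (annulus r₀ r₁)))
    (hgw : ∀ z ∈ annulus r₀ r₁, ‖g z - w‖ ≤ K * ‖z‖) :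
    IntegrableOn (fun z => (‖z‖ ^ 2)⁻¹ • g z) (annulus r₀ r₁) := by
  refine ((integrableOn_annulus_inv_norm_sq_smul_sub hr₀ hg hgw).add
    ((integrableOn_annulus_inv_norm_sq hr₀).smul_const w)).congr_fun
    (fun z _ => ?_) measurableSet_annulus
  simp only [Pi.add_apply, ← smul_add, sub_add_cancel]

theorem norm_integral_annulus_inv_norm_sq_smul_sub_le [CompleteSpace E] (hr₀ : 0 < r₀)
    (hr : r₀ ≤ r₁)
    (hg : AEStronglyMeasurable g (volume.restrict (annulus r₀ r₁)))
    (hgw : ∀ z ∈ annulus r₀ r₁, ‖g z - w‖ ≤ K * ‖z‖) :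
    ‖(∫ z in annulus r₀ r₁, (‖z‖ ^ 2)⁻¹ • g z) - (2 * π * log (r₁ / r₀)) • w‖ ≤
      2 * π * K * (r₁ - r₀) := by
  have hsplit : (∫ z in annulus r₀ r₁, (‖z‖ ^ 2)⁻¹ • g z) - (2 * π * log (r₁ / r₀)) • w =
      ∫ z in annulus r₀ r₁, (‖z‖ ^ 2)⁻¹ • (g z - w) := by
    simp_rw [smul_sub]
    rw [integral_sub (integrableOn_annulus_inv_norm_sq_smul hr₀ hg hgw)
      ((integrableOn_annulus_inv_norm_sq hr₀).smul_const w), integral_smul_const,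
      integral_annulus_inv_norm_sq hr₀ hr]
  calc ‖(∫ z in annulus r₀ r₁, (‖z‖ ^ 2)⁻¹ • g z) - (2 * π * log (r₁ / r₀)) • w‖
      = ‖∫ z in annulus r₀ r₁, (‖z‖ ^ 2)⁻¹ • (g z - w)‖ := by rw [hsplit]
    _ ≤ ∫ z in annulus r₀ r₁, K * ‖z‖⁻¹ :=
        norm_integral_le_of_norm_le ((integrableOn_annulus_inv_norm hr₀).const_mul K)
          (ae_norm_inv_norm_sq_smul_sub_le hr₀ hgw)
    _ = 2 * π * K * (r₁ - r₀) := by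
      rw [integral_const_mul, integral_annulus_inv_norm hr₀ hr]; ring

end LinearDeviation

theorem norm_mul_sub_mul_le {R : Type*} [NormedRing R] (x y a b : R) :
    ‖x * y - a * b‖ ≤ ‖x - a‖ * ‖y‖ + ‖a‖ * ‖y - b‖ :=
  calc ‖x * y - a * b‖ = ‖(x - a) * y + a * (y - b)‖ := by noncomm_ring
    _ ≤ ‖x - a‖ * ‖y‖ + ‖a‖ * ‖y - b‖ :=
      (norm_add_le _ _).trans (add_le_add (norm_mul_le _ _) (norm_mul_le _ _))

theorem norm_mul_mul_sub_mul_mul_le {R : Type*} [NormedRing R] {c₁ c₂ k z u₁ u₂ v : R} {M₁ M₂ L : ℝ}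
    (hk : ‖k‖ ≤ 1) (hz : ‖z‖ ≤ 1) (hu₁ : ‖u₁‖ ≤ M₁) (hu₂ : ‖u₂‖ ≤ M₂) (hL : 0 ≤ L)
    (hv : ‖v‖ ≤ L * ‖z‖) :
    ‖(c₁ + z * u₁) * (c₂ + z * u₂) * (k + v) - c₁ * c₂ * k‖ ≤
      ((M₁ * (‖c₂‖ + M₂) + ‖c₁‖ * M₂) * (1 + L) + ‖c₁‖ * ‖c₂‖ * L) * ‖z‖ := by
  have hzu₁ : ‖z * u₁‖ ≤ ‖z‖ * M₁ := (norm_mul_le _ _).trans (by gcongr)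
  have hzu₂ : ‖z * u₂‖ ≤ ‖z‖ * M₂ := (norm_mul_le _ _).trans (by gcongr)
  have hM₁ : 0 ≤ M₁ := (norm_nonneg _).trans hu₁
  have hM₂ : 0 ≤ M₂ := (norm_nonneg _).trans hu₂
  have hprod : ‖(c₁ + z * u₁) * (c₂ + z * u₂) - c₁ * c₂‖ ≤
      (M₁ * (‖c₂‖ + M₂) + ‖c₁‖ * M₂) * ‖z‖ :=
    calc _ ≤ ‖z * u₁‖ * ‖c₂ + z * u₂‖ + ‖c₁‖ * ‖z * u₂‖ := by
          simpa using norm_mul_sub_mul_le (c₁ + z * u₁) (c₂ + z * u₂) c₁ c₂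
      _ ≤ ‖z‖ * M₁ * (‖c₂‖ + ‖z‖ * M₂) + ‖c₁‖ * (‖z‖ * M₂) := by
          gcongr; exact (norm_add_le _ _).trans (by gcongr)
      _ ≤ _ := by
          nlinarith [mul_nonneg (mul_nonneg (mul_nonneg hM₁ hM₂) (norm_nonneg z)) (sub_nonneg.2 hz)]
  have hkv : ‖k + v‖ ≤ 1 + L :=
    (norm_add_le _ _).trans (add_le_add hk (hv.trans (mul_le_of_le_one_right hL hz)))
  calc _ ≤ ‖(c₁ + z * u₁) * (c₂ + z * u₂) - c₁ * c₂‖ * ‖k + v‖ + ‖c₁ * c₂‖ * ‖v‖ := by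
        simpa using norm_mul_sub_mul_le ((c₁ + z * u₁) * (c₂ + z * u₂)) (k + v) (c₁ * c₂) k
    _ ≤ (M₁ * (‖c₂‖ + M₂) + ‖c₁‖ * M₂) * ‖z‖ * (1 + L) + ‖c₁‖ * ‖c₂‖ * (L * ‖z‖) := by
        gcongr
        exact norm_mul_le _ _
    _ = _ := by ring

theorem exists_norm_mul_mul_sub_mul_mul_le {c₁ c₂ k : ℂ} {h₁ h₂ H : ℂ → ℂ} {L : ℝ} (hk : ‖k‖ ≤ 1)
    (hh₁ : ContinuousOn h₁ (closedBall 0 1)) (hh₂ : ContinuousOn h₂ (closedBall 0 1))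
    (hL : 0 ≤ L) (hH : ∀ z : ℂ, ‖z‖ ≤ 1 → ‖H z‖ ≤ L * ‖z‖) :
    ∃ K, 0 ≤ K ∧ ∀ z ∈ closedBall (0 : ℂ) 1,
      ‖(c₁ + z * h₁ z) * (c₂ + z * h₂ z) * (k + H z) - c₁ * c₂ * k‖ ≤ K * ‖z‖ := by
  obtain ⟨M₁, hM₁⟩ := (isCompact_closedBall (0 : ℂ) 1).exists_bound_of_continuousOn hh₁
  obtain ⟨M₂, hM₂⟩ := (isCompact_closedBall (0 : ℂ) 1).exists_bound_of_continuousOn hh₂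
  have hbound : ∀ z ∈ closedBall (0 : ℂ) 1,
      ‖(c₁ + z * h₁ z) * (c₂ + z * h₂ z) * (k + H z) - c₁ * c₂ * k‖ ≤
        ((M₁ * (‖c₂‖ + M₂) + ‖c₁‖ * M₂) * (1 + L) + ‖c₁‖ * ‖c₂‖ * L) * ‖z‖ := fun z hz =>
    have hz₁ := mem_closedBall_zero_iff.mp hz
    norm_mul_mul_sub_mul_mul_le hk hz₁ (hM₁ z hz) (hM₂ z hz) hL (hH z hz₁)
  exact ⟨_, (norm_nonneg _).trans (by simpa using hbound 1 (by simp)), hbound⟩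

theorem div_add_mul_div_add_mul_div_conj {z : ℂ} (hz : z ≠ 0) (c₁ c₂ u₁ u₂ : ℂ) :
    (c₁ / z + u₁) * (c₂ / z + u₂) * (z / (starRingEnd ℂ) z) =
      (‖z‖ ^ 2)⁻¹ • ((c₁ + z * u₁) * (c₂ + z * u₂)) := by
  have hz' : (starRingEnd ℂ) z ≠ 0 := (map_ne_zero _).mpr hz
  rw [Complex.real_smul, Complex.ofReal_inv, Complex.ofReal_pow, ← Complex.mul_conj']
  field_simp

theorem abs_integral_sub_log_term_le_general (c c₁ c₂ : ℂ) (hc : c ≠ 0) (h₁ h₂ : ℂ → ℂ) (U : Set ℂ)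
    (hsub : Metric.closedBall (0 : ℂ) 1 ⊆ U)
    (hh₁ : DifferentiableOn ℂ h₁ U) (hh₂ : DifferentiableOn ℂ h₂ U)
    (L : ℝ) (hL : 0 ≤ L) (H : ℂ → ℂ) (hHmeas : Measurable H)
    (hH : ∀ z : ℂ, ‖z‖ ≤ 1 → ‖H z‖ ≤ L * ‖z‖) :
    ∃ C > (0 : ℝ), ∀ r₀ : ℝ, 0 < r₀ → r₀ < 1 →
      IntegrableOn (fun z : ℂ =>
        (c₁ / z + h₁ z) * (c₂ / z + h₂ z) * (z / (starRingEnd ℂ) z) *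
          ((starRingEnd ℂ) c / c + H z))
        {z : ℂ | r₀ ≤ ‖z‖ ∧ ‖z‖ ≤ 1} volume ∧
      ‖(∫ z in {z : ℂ | r₀ ≤ ‖z‖ ∧ ‖z‖ ≤ 1},
          (c₁ / z + h₁ z) * (c₂ / z + h₂ z) * (z / (starRingEnd ℂ) z) *
            ((starRingEnd ℂ) c / c + H z)) -
        2 * (Real.pi : ℂ) * c₁ * c₂ * ((starRingEnd ℂ) c / c) *
          (Real.log (1 / r₀) : ℂ)‖ ≤ C := by
  set k := (starRingEnd ℂ) c / c
  have hk : ‖k‖ ≤ 1 := by rw [norm_div, RCLike.norm_conj, div_self (norm_ne_zero_iff.mpr hc)]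
  have hcont₁ := hh₁.continuousOn.mono hsub
  have hcont₂ := hh₂.continuousOn.mono hsub
  obtain ⟨K, hK, hgw⟩ :=
    exists_norm_mul_mul_sub_mul_mul_le (c₁ := c₁) (c₂ := c₂) hk hcont₁ hcont₂ hL hH
  set g : ℂ → ℂ := fun z => (c₁ + z * h₁ z) * (c₂ + z * h₂ z) * (k + H z)
  have hg : AEStronglyMeasurable g (volume.restrict (closedBall 0 1)) :=
    (((continuousOn_const.add (continuousOn_id.mul hcont₁)).mul
      (continuousOn_const.add (continuousOn_id.mul hcont₂))).aestronglyMeasurable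
        measurableSet_closedBall).mul (measurable_const.add hHmeas).aestronglyMeasurable
  refine ⟨2 * π * K + 1, by positivity, fun r₀ hr₀ hr₁ => ?_⟩
  have hA : annulus r₀ 1 ⊆ closedBall 0 1 := fun z hz => mem_closedBall_zero_iff.mpr hz.2
  have hgA := hg.mono_measure (Measure.restrict_mono hA le_rfl)
  have hgwA : ∀ z ∈ annulus r₀ 1, ‖g z - c₁ * c₂ * k‖ ≤ K * ‖z‖ := fun z hz => hgw z (hA hz)
  have hF : EqOn (fun z : ℂ => (c₁ / z + h₁ z) * (c₂ / z + h₂ z) * (z / (starRingEnd ℂ) z) *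
      (k + H z)) (fun z => (‖z‖ ^ 2)⁻¹ • g z) (annulus r₀ 1) := fun z hz => by
    beta_reduce
    rw [div_add_mul_div_add_mul_div_conj (norm_pos_iff.mp (norm_pos_of_mem_annulus hr₀ hz)),
      smul_mul_assoc]
  rw [show {z : ℂ | r₀ ≤ ‖z‖ ∧ ‖z‖ ≤ 1} = annulus r₀ 1 from rfl]
  refine ⟨(integrableOn_annulus_inv_norm_sq_smul hr₀ hgA hgwA).congr_fun hF.symm
    measurableSet_annulus, ?_⟩
  calc _ = ‖(∫ z in annulus r₀ 1, (‖z‖ ^ 2)⁻¹ • g z) -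
        (2 * π * log (1 / r₀)) • (c₁ * c₂ * k)‖ := by
        rw [setIntegral_congr_fun measurableSet_annulus hF, Complex.real_smul]
        push_cast
        ring_nf
    _ ≤ 2 * π * K * (1 - r₀) := norm_integral_annulus_inv_norm_sq_smul_sub_le hr₀ hr₁.le hgA hgwA
    _ ≤ 2 * π * K + 1 := by nlinarith [pi_pos, mul_nonneg pi_pos.le hK]

/-- The analytic core of Lemma `DPiDivergentTerm`: with `c ≠ 0`, `h₁, h₂` holomorphic on an
open set containing the closed unit disc, and `H` measurable with `|H z| ≤ L * |z|` on the
closed unit disc, there is a constant `C > 0` such that for every inner radius `0 < r₀ < 1` the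
integrand is integrable on the closed annulus `{z : r₀ ≤ |z| ≤ 1}` and the integral differs
from `2π · c₁ · c₂ · (conj c / c) · log (1/r₀)` by at most `C` in modulus. -/
theorem abs_integral_sub_log_term_le (c c₁ c₂ : ℂ) (hc : c ≠ 0) (h₁ h₂ : ℂ → ℂ) (U : Set ℂ)
    (hU : IsOpen U) (hsub : Metric.closedBall (0 : ℂ) 1 ⊆ U)
    (hh₁ : DifferentiableOn ℂ h₁ U) (hh₂ : DifferentiableOn ℂ h₂ U)
    (L : ℝ) (hL : 0 ≤ L) (H : ℂ → ℂ) (hHmeas : Measurable H)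
    (hH : ∀ z : ℂ, ‖z‖ ≤ 1 → ‖H z‖ ≤ L * ‖z‖) :
    ∃ C > (0 : ℝ), ∀ r₀ : ℝ, 0 < r₀ → r₀ < 1 →
      IntegrableOn (fun z : ℂ =>
        (c₁ / z + h₁ z) * (c₂ / z + h₂ z) * (z / (starRingEnd ℂ) z) *
          ((starRingEnd ℂ) c / c + H z))
        {z : ℂ | r₀ ≤ ‖z‖ ∧ ‖z‖ ≤ 1} volume ∧
      ‖(∫ z in {z : ℂ | r₀ ≤ ‖z‖ ∧ ‖z‖ ≤ 1},
          (c₁ / z + h₁ z) * (c₂ / z + h₂ z) * (z / (starRingEnd ℂ) z) *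
            ((starRingEnd ℂ) c / c + H z)) -
        2 * (Real.pi : ℂ) * c₁ * c₂ * ((starRingEnd ℂ) c / c) *
          (Real.log (1 / r₀) : ℂ)‖ ≤ C :=
  abs_integral_sub_log_term_le_general c c₁ c₂ hc h₁ h₂ U hsub hh₁ hh₂ L hL H hHmeas hH
end

section
/- Let m be a natural number, let c : Fin m → ℂ be a family of nonzero complex numbers, and let ε > 0. Then there exist real numbers θ and t such that for every j : Fin m, the complex number d_j = e^{−t}·Re(e^{iθ}·c_j) + i·e^{t}·Im(e^{iθ}·c_j) is nonzero and ε-nearly imaginary. -/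
open MeasureTheory

/-- A nonzero complex number `d` is `ε`-nearly imaginary if its principal argument is within
`ε` of `π/2` or of `-π/2`. -/
def NearlyImaginary (ε : ℝ) (d : ℂ) : Prop :=
  |Complex.arg d - Real.pi / 2| < ε ∨ |Complex.arg d + Real.pi / 2| < ε

/-- The residue `c` transformed by a rotation `e^{iθ}` followed by the Teichmüller geodesic
flow `G_t` (Lemma `GtResidue`): `a + ib ↦ a·e^{-t} + i·b·e^{t}`. -/
noncomputable def flowResidue (θ t : ℝ) (c : ℂ) : ℂ :=
  (Real.exp (-t) * (Complex.exp (θ * Complex.I) * c).re : ℝ) +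
    Complex.I * (Real.exp t * (Complex.exp (θ * Complex.I) * c).im : ℝ)

/-! `geodesicFlow t z` is a positive multiple of `e^{-2t} Re z + i Im z`, which tends to
`i Im z` as `t → ∞`; as `arg` is continuous there, `arg (geodesicFlow t z)` tends to `±π/2`
as soon as `Im z ≠ 0`.
Only countably many rotation angles make some `e^{iθ} c_j` real, so one rotation puts every
residue in this situation, and a single large time then works for all of them at once. -/

open Complex Filter Topology

noncomputable def geodesicFlow (t : ℝ) (z : ℂ) : ℂ :=
  (Real.exp (-t) * z.re : ℝ) + I * (Real.exp t * z.im : ℝ)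

theorem flowResidue_eq_geodesicFlow (θ t : ℝ) (c : ℂ) :
    flowResidue θ t c = geodesicFlow t (exp (θ * I) * c) :=
  rfl

@[simp]
theorem geodesicFlow_re (t : ℝ) (z : ℂ) : (geodesicFlow t z).re = Real.exp (-t) * z.re := by
  simp [geodesicFlow, -ofReal_exp]

@[simp]
theorem geodesicFlow_im (t : ℝ) (z : ℂ) : (geodesicFlow t z).im = Real.exp t * z.im := by
  simp [geodesicFlow, -ofReal_exp]

theorem geodesicFlow_ne_zero {z : ℂ} (hz : z.im ≠ 0) (t : ℝ) : geodesicFlow t z ≠ 0 := by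
  intro h
  simpa [hz, Real.exp_ne_zero] using congrArg im h

theorem arg_geodesicFlow (t : ℝ) (z : ℂ) :
    arg (geodesicFlow t z) = arg ((Real.exp (-(2 * t)) * z.re : ℝ) + z.im * I) := by
  have h₁ : Real.exp (-(2 * t)) = Real.exp (-t) * Real.exp (-t) := by
    rw [← Real.exp_add]; ring_nf
  have h₂ : Real.exp (-t) * Real.exp t = 1 := by
    rw [← Real.exp_add, neg_add_cancel, Real.exp_zero]
  rw [← arg_real_mul _ (Real.exp_pos (-t))]
  congr 1
  apply Complex.ext <;> simp [-ofReal_exp, h₁]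
  · ring
  · linear_combination z.im * h₂

theorem tendsto_arg_geodesicFlow {z : ℂ} (hz : z.im ≠ 0) :
    Tendsto (fun t => arg (geodesicFlow t z)) atTop (𝓝 (arg (z.im * I))) := by
  have hslit : (z.im : ℂ) * I ∈ slitPlane := by simp [mem_slitPlane_iff, hz]
  have hdecay : Tendsto (fun t : ℝ => Real.exp (-(2 * t))) atTop (𝓝 0) :=
    Real.tendsto_exp_neg_atTop_nhds_zero.comp (tendsto_id.const_mul_atTop two_pos)
  have hlim := ((continuous_ofReal.tendsto 0).comp
    (zero_mul z.re ▸ hdecay.mul_const z.re)).add_const ((z.im : ℂ) * I)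
  rw [ofReal_zero, zero_add] at hlim
  simp only [arg_geodesicFlow]
  exact (continuousAt_arg hslit).tendsto.comp hlim

theorem arg_ofReal_mul_I {b : ℝ} (hb : b ≠ 0) :
    arg (b * I) = Real.pi / 2 ∨ arg (b * I) = -(Real.pi / 2) := by
  rcases hb.lt_or_gt with hb | hb
  · right
    rw [show (b : ℂ) * I = ((-b : ℝ) : ℂ) * -I by push_cast; ring,
      arg_real_mul _ (neg_pos.2 hb), arg_neg_I]
  · left
    rw [arg_real_mul _ hb, arg_I]

theorem nearlyImaginary_of_abs_arg_sub_lt {ε b : ℝ} (hb : b ≠ 0) {d : ℂ}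
    (h : |arg d - arg (b * I)| < ε) : NearlyImaginary ε d := by
  rcases arg_ofReal_mul_I hb with hπ | hπ
  · exact .inl (hπ ▸ h)
  · exact .inr (by rwa [hπ, sub_neg_eq_add] at h)

theorem eventually_nearlyImaginary_geodesicFlow {z : ℂ} (hz : z.im ≠ 0) {ε : ℝ}
    (hε : 0 < ε) :
    ∀ᶠ t in atTop, NearlyImaginary ε (geodesicFlow t z) :=
  ((tendsto_arg_geodesicFlow hz).eventually (Metric.ball_mem_nhds _ hε)).mono
    fun _ ht => nearlyImaginary_of_abs_arg_sub_lt hz ht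

theorem countable_setOf_im_exp_mul_I_mul_eq_zero {c : ℂ} (hc : c ≠ 0) :
    {θ : ℝ | (exp (θ * I) * c).im = 0}.Countable := by
  refine (Set.countable_range fun n : ℤ => n * Real.pi - arg c).mono fun θ hθ => ?_
  have him : (exp (θ * I) * c).im = ‖c‖ * Real.sin (θ + arg c) := by
    conv_lhs => rw [← norm_mul_exp_arg_mul_I c]
    rw [mul_left_comm, ← exp_add, ← add_mul, ← ofReal_add, im_ofReal_mul, exp_ofReal_mul_I_im]
  rw [Set.mem_ofPred_eq, him] at hθ
  obtain ⟨n, hn⟩ :=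
    Real.sin_eq_zero_iff.1 ((mul_eq_zero.1 hθ).resolve_left (norm_ne_zero_iff.2 hc))
  exact ⟨n, by simp only [hn, add_sub_cancel_right]⟩

theorem exists_forall_im_exp_mul_I_mul_ne_zero {ι : Type*} [Countable ι] {c : ι → ℂ}
    (hc : ∀ j, c j ≠ 0) : ∃ θ : ℝ, ∀ j, (exp (θ * I) * c j).im ≠ 0 := by
  have hbad : (⋃ j, {θ : ℝ | (exp (θ * I) * c j).im = 0}).Countable :=
    Set.countable_iUnion fun j => countable_setOf_im_exp_mul_I_mul_eq_zero (hc j)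
  obtain ⟨θ, hθ⟩ := (hbad.dense_compl ℝ).nonempty
  simp only [Set.mem_compl_iff, Set.mem_iUnion, not_exists] at hθ
  exact ⟨θ, hθ⟩

/-- **Lemma `MostlyImagRes`.** Given finitely many nonzero residues `c j` and `ε > 0`, there
are a rotation angle `θ` and a flow time `t` such that each transformed residue
`e^{-t}·Re(e^{iθ} c j) + i·e^{t}·Im(e^{iθ} c j)` is nonzero and `ε`-nearly imaginary. -/
theorem exists_rotation_time_nearlyImaginary (m : ℕ) (c : Fin m → ℂ)
    (hc : ∀ j, c j ≠ 0) (ε : ℝ) (hε : 0 < ε) :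
    ∃ θ t : ℝ, ∀ j : Fin m,
      flowResidue θ t (c j) ≠ 0 ∧ NearlyImaginary ε (flowResidue θ t (c j)) := by
  simp only [flowResidue_eq_geodesicFlow]
  obtain ⟨θ, hθ⟩ := exists_forall_im_exp_mul_I_mul_ne_zero hc
  obtain ⟨t, ht⟩ :=
    (eventually_all.2 fun j => eventually_nearlyImaginary_geodesicFlow (hθ j) hε).exists
  exact ⟨θ, t, fun j => ⟨geodesicFlow_ne_zero (hθ j) t, ht j⟩⟩
end

section
/- Let r > 0 and let a, b ∈ ℂ with r < |a| and r < |b|. Then the circle integral along the circle of radius r centered at 0, ∮_{|z| = r} (r² − conj(a)·z)·(r² − conj(b)·z) / (z·(z − a)·(z − b)) dz, equals 2πi·r⁴/(a·b). -/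
open Metric Complex Real

lemma differentiableOn_div_sub_mul_sub {p : ℂ → ℂ} {s : Set ℂ} (hp : DifferentiableOn ℂ p s)
    {a b : ℂ} (ha : a ∉ s) (hb : b ∉ s) :
    DifferentiableOn ℂ (fun z => p z / ((z - a) * (z - b))) s :=
  hp.div (by fun_prop) fun _ hz =>
    mul_ne_zero (sub_ne_zero.2 (ne_of_mem_of_not_mem hz ha))
      (sub_ne_zero.2 (ne_of_mem_of_not_mem hz hb))

/-- Only the simple pole at `0` lies inside the circle, so this is Cauchy's formula applied to
`p z / ((z - a) * (z - b))`. -/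
theorem circleIntegral_div_mul_sub_mul_sub {p : ℂ → ℂ} {R : ℝ}
    (hp : DifferentiableOn ℂ p (closedBall 0 R)) (hR : 0 < R) {a b : ℂ}
    (ha : R < ‖a‖) (hb : R < ‖b‖) :
    (∮ z in C(0, R), p z / (z * (z - a) * (z - b))) = 2 * π * I * (p 0 / (a * b)) := by
  have notMem {c : ℂ} (hc : R < ‖c‖) : c ∉ closedBall (0 : ℂ) R := by
    simpa only [mem_closedBall_zero_iff, not_le] using hc
  have hd := differentiableOn_div_sub_mul_sub hp (notMem ha) (notMem hb)
  calc (∮ z in C(0, R), p z / (z * (z - a) * (z - b)))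
      = ∮ z in C(0, R), (z - 0)⁻¹ • (p z / ((z - a) * (z - b))) := by
        congr 1 with z
        rw [sub_zero, smul_eq_mul, inv_mul_eq_div, div_div]
        ring
    _ = (2 * π * I : ℂ) • (p 0 / ((0 - a) * (0 - b))) :=
        hd.circleIntegral_sub_inv_smul (mem_ball_self hR)
    _ = 2 * π * I * (p 0 / (a * b)) := by
        rw [smul_eq_mul, zero_sub, zero_sub, neg_mul_neg]

/-- The residue computation in the proof of Lemma `Theta2NotZeroOnSphere`: for `0 < r` and
`a, b` of modulus greater than `r`, the integral over the positively oriented circle of radius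
`r` centered at `0` of `(r² − conj a · z)(r² − conj b · z) / (z (z − a)(z − b))` equals
`2πi·r⁴/(a·b)`. -/
theorem circleIntegral_sphere_chart_zero (r : ℝ) (hr : 0 < r) (a b : ℂ)
    (ha : r < ‖a‖) (hb : r < ‖b‖) :
    (∮ z in C(0, r),
        ((r : ℂ) ^ 2 - (starRingEnd ℂ) a * z) * ((r : ℂ) ^ 2 - (starRingEnd ℂ) b * z) /
          (z * (z - a) * (z - b))) =
      2 * Real.pi * Complex.I * (r : ℂ) ^ 4 / (a * b) := by
  rw [circleIntegral_div_mul_sub_mul_sub (by fun_prop) hr ha hb]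
  ring
end

section
/- Let r > 0 and let a, b ∈ ℂ with r·|a| < 1 and r·|b| < 1. Then the circle integral along the circle of radius r centered at 0, ∮_{|z| = r} (z − conj(a)·r²)·(z − conj(b)·r²) / (z·(1 − a·z)·(1 − b·z)) dz, equals 2πi·conj(a)·conj(b)·r⁴. -/
open Complex Metric

lemma one_sub_mul_ne_zero_of_mem_closedBall {R : Type*} [NormedRing R] [NormOneClass R]
    {r : ℝ} {a z : R} (ha : r * ‖a‖ < 1) (hz : z ∈ closedBall (0 : R) r) : 1 - a * z ≠ 0 := by
  rw [sub_ne_zero]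
  intro h
  have hzr : ‖z‖ ≤ r := mem_closedBall_zero_iff.mp hz
  have : ‖a * z‖ ≤ ‖a‖ * r := (norm_mul_le a z).trans (by gcongr)
  rw [← h, norm_one] at this
  linarith

theorem circleIntegral_div_sub_center {f : ℂ → ℂ} {c : ℂ} {R : ℝ} (hR : 0 < R)
    (hf : DifferentiableOn ℂ f (closedBall c R)) :
    (∮ z in C(c, R), f z / (z - c)) = 2 * Real.pi * I * f c := by
  have hf' : DiffContOnCl ℂ f (ball c R) :=
    DifferentiableOn.diffContOnCl (by rwa [closure_ball c hR.ne'])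
  simpa only [div_eq_inv_mul, smul_eq_mul] using
    hf'.circleIntegral_sub_inv_smul (mem_ball_self hR)

/-- The second residue computation in the proof of Lemma `Theta2NotZeroOnSphere` (chart at
infinity): for `0 < r` and `a, b` with `r·|a| < 1` and `r·|b| < 1`, the integral over the
positively oriented circle of radius `r` centered at `0` of
`(z − conj a · r²)(z − conj b · r²) / (z (1 − a z)(1 − b z))` equals `2πi·conj a·conj b·r⁴`. -/
theorem circleIntegral_sphere_chart_infinity (r : ℝ) (hr : 0 < r) (a b : ℂ)
    (ha : r * ‖a‖ < 1) (hb : r * ‖b‖ < 1) :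
    (∮ z in C(0, r),
        (z - (starRingEnd ℂ) a * (r : ℂ) ^ 2) * (z - (starRingEnd ℂ) b * (r : ℂ) ^ 2) /
          (z * (1 - a * z) * (1 - b * z))) =
      2 * Real.pi * Complex.I * (starRingEnd ℂ) a * (starRingEnd ℂ) b * (r : ℂ) ^ 4 := by
  set g : ℂ → ℂ := fun z =>
    (z - (starRingEnd ℂ) a * (r : ℂ) ^ 2) * (z - (starRingEnd ℂ) b * (r : ℂ) ^ 2) /
      ((1 - a * z) * (1 - b * z))
  have hg : DifferentiableOn ℂ g (closedBall 0 r) := fun z hz =>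
    have hab := mul_ne_zero (one_sub_mul_ne_zero_of_mem_closedBall ha hz)
      (one_sub_mul_ne_zero_of_mem_closedBall hb hz)
    (by fun_prop (disch := exact hab) : DifferentiableAt ℂ g z).differentiableWithinAt
  calc _ = ∮ z in C(0, r), g z / (z - 0) := by
        congr! 2 with z
        simp only [g, sub_zero, div_div]
        ring
    _ = 2 * Real.pi * I * g 0 := circleIntegral_div_sub_center hr hg
    _ = _ := by
        simp only [g]
        ring
end
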